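/- For every l ∈ ℕ, the graph F_{2^l} is a tree (it is connected and contains no cycle), whereas for every odd prime p and every l ∈ ℕ, the graph F_{p^l} is not a tree: it contains a cycle (for instance ∞ → 1/p^l → 2/p^l → ∞). -/

import Mathlib

/-- Membership in the vertex set `X_N`: a pair `(p, q)` of integers represents the
reduced fraction `p/q` with `q ≥ 0`, `gcd(p, q) = 1` and `N ∣ q`; the pair `(1, 0)`
represents `∞ = 1/0`. -/
def memX (N : ℕ) (v : ℤ × ℤ) : Prop :=
  0 ≤ v.2 ∧ IsCoprime v.1 v.2 ∧ (N : ℤ) ∣ v.2 ∧ (v.2 = 0 → v.1 = 1)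

/-- The vertex set `X_N` of the graph `F_N`. -/
def X (N : ℕ) : Type := {v : ℤ × ℤ // memX N v}

/-- The vertex `∞ = 1/0`. -/
def infty (N : ℕ) : X N :=
  ⟨(1, 0), ⟨le_refl 0, isCoprime_one_left, dvd_zero _, fun _ => rfl⟩⟩

/-- The value of a vertex as a rational number (`∞` is sent to junk). -/
def fval {N : ℕ} (v : X N) : ℚ := (v.1.1 : ℚ) / (v.1.2 : ℚ)

/-- The graph `F_N`: two vertices `p/q` and `r/s` (in lowest terms, with `∞ = 1/0`)
are adjacent if and only if `r*q - s*p = ±N`. -/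
def FareyGraph (N : ℕ) : SimpleGraph (X N) where
  Adj v w := v ≠ w ∧ (w.1.1 * v.1.2 - w.1.2 * v.1.1 = (N : ℤ) ∨
      w.1.1 * v.1.2 - w.1.2 * v.1.1 = -(N : ℤ))
  symm := ⟨by
    rintro v w ⟨hne, h | h⟩
    · exact ⟨hne.symm, Or.inr (by linear_combination -h)⟩
    · exact ⟨hne.symm, Or.inl (by linear_combination -h)⟩⟩
  loopless := ⟨by rintro v ⟨hne, -⟩; exact hne rfl⟩

/-!
Write a vertex as `a/b`. When `N` is even every numerator is odd, which forces adjacent vertices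
to have different denominators. If `r/s` and `r'/s'` are neighbours of `a/b` with `s, s' < b`, then
`(r ∓ r') b = (s ∓ s') a`, so by coprimality `r ∓ r' = m a` and `s ∓ s' = m b`; the bounds on the
denominators and the parity of the numerators leave only `m = 0`. So every vertex has at most one
neighbour of smaller denominator, and the vertex of largest denominator on a cycle would have two.

For `N = 2^l`, a vertex `a/b ≠ ∞` does have such a neighbour: of the two Farey parents of
`a/(b/N)`, whose numerators add up to `a`, one has an odd numerator. Descending denominators then
joins every vertex to `∞`. For odd `N`, the vertices `∞`, `1/N`, `2/N` form a triangle.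
-/

namespace SimpleGraph

variable {V α : Type*} {G : SimpleGraph V}

lemma reachable_of_exists_adj_lt [Preorder α] [WellFoundedLT α] (f : V → α) (r : V)
    (h : ∀ v, v ≠ r → ∃ u, G.Adj v u ∧ f u < f v) (v : V) : G.Reachable v r := by
  induction v using (InvImage.wf f wellFounded_lt).induction with
  | _ v ih =>
    by_cases hv : v = r
    · exact hv ▸ .rfl
    · obtain ⟨u, hvu, hu⟩ := h v hv
      exact hvu.reachable.trans (ih u hu)

lemma isAcyclic_of_unique_adj_lt [LinearOrder α] (f : V → α)
    (hne : ∀ u v, G.Adj u v → f u ≠ f v)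
    (huniq : ∀ v u w, G.Adj v u → G.Adj v w → f u < f v → f w < f v → u = w) :
    G.IsAcyclic := by
  classical
  intro v c hc
  obtain ⟨m, hm, hmax⟩ := c.support.toFinset.exists_max_image f ⟨v, by simp⟩
  rw [List.mem_toFinset] at hm
  set c' := c.rotate m hm
  have hc' : c'.IsCycle := hc.rotate hm
  have hlt : ∀ x ∈ c'.support, G.Adj m x → f x < f m := fun x hx hmx =>
    lt_of_le_of_ne (hmax x (by simpa [c'] using hx)) (hne m x hmx).symm
  have hsnd : G.Adj m c'.snd := c'.adj_snd hc'.not_nil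
  have hpen : G.Adj m c'.penultimate := (c'.adj_penultimate hc'.not_nil).symm
  exact hc'.snd_ne_penultimate <| huniq m _ _ hsnd hpen
    (hlt _ (c'.getVert_mem_support _) hsnd) (hlt _ (c'.getVert_mem_support _) hpen)

end SimpleGraph

namespace Int

lemma eq_of_det_eq_pm_of_lt {a b r s r' s' n : ℤ} (ha : Odd a) (hab : IsCoprime a b)
    (hr : Odd r) (hr' : Odd r') (hs : 0 ≤ s) (hs' : 0 ≤ s') (hsb : s < b) (hs'b : s' < b)
    (hr1 : s = 0 → r = 1) (hr1' : s' = 0 → r' = 1)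
    (h : r * b - s * a = n ∨ r * b - s * a = -n)
    (h' : r' * b - s' * a = n ∨ r' * b - s' * a = -n) : r = r' ∧ s = s' := by
  obtain ⟨σ, hσ, hdet⟩ : ∃ σ : ℤ, (σ = 1 ∨ σ = -1) ∧ (r - σ * r') * b = a * (s - σ * s') := by
    rcases h with h | h <;> rcases h' with h' | h'
    exacts [⟨1, .inl rfl, by linear_combination h - h'⟩,
      ⟨-1, .inr rfl, by linear_combination h + h'⟩,
      ⟨-1, .inr rfl, by linear_combination h + h'⟩,
      ⟨1, .inl rfl, by linear_combination h - h'⟩]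
  obtain ⟨m, hm⟩ : a ∣ r - σ * r' := hab.dvd_of_dvd_mul_right ⟨_, hdet⟩
  have ha0 : a ≠ 0 := by rintro rfl; simp at ha
  have hsm : s - σ * s' = m * b :=
    mul_left_cancel₀ ha0 (by linear_combination -hdet + b * hm)
  obtain ⟨x, rfl⟩ := hr
  obtain ⟨y, rfl⟩ := hr'
  obtain ⟨z, rfl⟩ := ha
  rcases hσ with rfl | rfl
  · obtain rfl : m = 0 := by
      have : -1 < m := by nlinarith
      have : m < 1 := by nlinarith
      omega
    constructor <;> linarith
  · obtain rfl | rfl : m = 0 ∨ m = 1 := by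
      have : 0 ≤ m := by nlinarith
      have : m < 2 := by nlinarith
      omega
    · have hr1 := hr1 (by linarith)
      have hr1' := hr1' (by linarith)
      omega
    · omega

lemma exists_odd_det_eq_pm_one {a c : ℤ} (hac : IsCoprime a c) (hc : 0 < c) :
    ∃ r t : ℤ, Odd r ∧ 0 ≤ t ∧ t < c ∧ (t = 0 → r = 1) ∧
      (r * c - t * a = 1 ∨ r * c - t * a = -1) := by
  obtain ⟨x, y, hxy⟩ := hac
  have hdiv := emod_add_mul_ediv (-x) c
  set t := (-x) % c
  set r := y - (-x) / c * a
  have hdet : r * c - t * a = 1 := by linear_combination hxy - a * hdiv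
  have ht0 : 0 ≤ t := emod_nonneg _ hc.ne'
  have htc : t < c := emod_lt_of_pos _ hc
  have hr1 : t = 0 → r = 1 := fun h => by
    rw [h] at hdet
    nlinarith
  rcases even_or_odd r with hr | hr
  · have ht : t ≠ 0 := fun h => by simp [hr1 h] at hr
    refine ⟨a - r, c - t, ?_, by omega, by omega, by omega, .inr (by linear_combination -hdet)⟩
    have hta : Odd (t * a) := by
      rw [show t * a = r * c - 1 by linear_combination -hdet]
      exact (hr.mul_right c).sub_odd odd_one
    exact (odd_mul.mp hta).2.sub_even hr
  · exact ⟨r, t, hr, ht0, htc, hr1, .inl hdet⟩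

end Int

namespace FareyGraph

variable {N : ℕ}

lemma eq_infty_of_snd_eq_zero {v : X N} (h : v.1.2 = 0) : v = infty N :=
  Subtype.ext (Prod.ext (v.2.2.2.2 h) h)

lemma odd_fst_of_even (hN : Even N) (v : X N) : Odd v.1.1 :=
  Int.isCoprime_two_right.mp <| v.2.2.1.of_isCoprime_of_dvd_right <|
    (Int.natCast_dvd_natCast.mpr hN.two_dvd).trans v.2.2.2.1

lemma snd_ne_snd_of_adj (hN : Even N) {v w : X N} (h : (FareyGraph N).Adj v w) :
    v.1.2 ≠ w.1.2 := by
  intro hvw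
  obtain ⟨hne, hdet⟩ := h
  by_cases hb : v.1.2 = 0
  · exact hne ((eq_infty_of_snd_eq_zero hb).trans (eq_infty_of_snd_eq_zero (hvw ▸ hb)).symm)
  · obtain ⟨x, hx⟩ := odd_fst_of_even hN v
    obtain ⟨y, hy⟩ := odd_fst_of_even hN w
    obtain ⟨c, hc⟩ := v.2.2.2.1
    rw [← hvw, hx, hy, hc] at hdet
    have hN0 : (N : ℤ) = 0 := by
      rcases hdet with h | h
      · rcases mul_eq_zero.mp (by linear_combination h : (N : ℤ) * (2 * ((y - x) * c) - 1) = 0)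
          with h | h <;> omega
      · rcases mul_eq_zero.mp (by linear_combination h : (N : ℤ) * (2 * ((y - x) * c) + 1) = 0)
          with h | h <;> omega
    exact hb (by rw [hc, hN0, zero_mul])

lemma eq_of_adj_of_snd_lt (hN : Even N) {v u w : X N} (hu : (FareyGraph N).Adj v u)
    (hw : (FareyGraph N).Adj v w) (hu' : u.1.2 < v.1.2) (hw' : w.1.2 < v.1.2) : u = w := by
  obtain ⟨hr, hr'⟩ := Int.eq_of_det_eq_pm_of_lt (odd_fst_of_even hN v) v.2.2.1
    (odd_fst_of_even hN u) (odd_fst_of_even hN w) u.2.1 w.2.1 hu' hw' u.2.2.2.2 w.2.2.2.2 hu.2 hw.2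
  exact Subtype.ext (Prod.ext hr hr')

theorem isAcyclic_of_even (hN : Even N) : (FareyGraph N).IsAcyclic :=
  SimpleGraph.isAcyclic_of_unique_adj_lt (fun v => v.1.2) (fun _ _ => snd_ne_snd_of_adj hN)
    (fun _ _ _ => eq_of_adj_of_snd_lt hN)

lemma exists_adj_snd_lt_of_ne_infty (l : ℕ) {v : X (2 ^ l)} (hv : v ≠ infty (2 ^ l)) :
    ∃ u, (FareyGraph (2 ^ l)).Adj v u ∧ u.1.2 < v.1.2 := by
  set n : ℤ := ((2 ^ l : ℕ) : ℤ) with hn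
  have hn0 : 0 < n := by positivity
  obtain ⟨hb0, hcop, ⟨c, hc⟩, -⟩ := v.2
  have hc0 : 0 < c := by
    have hb : 0 < v.1.2 := hb0.lt_of_ne' fun h => hv (eq_infty_of_snd_eq_zero h)
    rw [hc] at hb
    exact pos_of_mul_pos_right hb hn0.le
  obtain ⟨r, t, hr, ht0, htc, hr1, hdet⟩ :=
    Int.exists_odd_det_eq_pm_one (hcop.of_isCoprime_of_dvd_right (Dvd.intro_left _ hc.symm)) hc0
  have hrt : IsCoprime r t := by
    rcases hdet with h | h
    exacts [⟨c, -v.1.1, by linear_combination h⟩, ⟨-c, v.1.1, by linear_combination -h⟩]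
  have hrn : IsCoprime r n := by
    rw [hn, Nat.cast_pow, Nat.cast_ofNat]
    exact (Int.isCoprime_two_right.mpr hr).pow_right
  have hmem : memX (2 ^ l) (r, n * t) :=
    ⟨by positivity, hrn.mul_right hrt, dvd_mul_right _ _,
      fun h => hr1 ((mul_eq_zero.mp h).resolve_left hn0.ne')⟩
  have hlt : n * t < v.1.2 := hc ▸ mul_lt_mul_of_pos_left htc hn0
  refine ⟨⟨_, hmem⟩, ⟨fun h => hlt.ne (congrArg (fun w : X _ => w.1.2) h).symm, ?_⟩, hlt⟩
  rw [hc]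
  rcases hdet with h | h
  exacts [.inl (by linear_combination n * h), .inr (by linear_combination n * h)]

theorem connected_two_pow (l : ℕ) : (FareyGraph (2 ^ l)).Connected := by
  refine (SimpleGraph.connected_iff_exists_forall_reachable _).mpr ⟨infty _, fun v => ?_⟩
  refine (SimpleGraph.reachable_of_exists_adj_lt (fun v => v.1.2.toNat) _
    (fun v hv => ?_) v).symm
  obtain ⟨u, hvu, hlt⟩ := exists_adj_snd_lt_of_ne_infty l hv
  exact ⟨u, hvu, by have := u.2.1; omega⟩

theorem not_isAcyclic_of_odd (hN : Odd N) : ¬ (FareyGraph N).IsAcyclic := by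
  classical
  have hN0 : (N : ℤ) ≠ 0 := by exact_mod_cast hN.pos.ne'
  let v₁ : X N := ⟨(1, N), by positivity, isCoprime_one_left, dvd_rfl, fun _ => rfl⟩
  let v₂ : X N := ⟨(2, N), by positivity, Int.isCoprime_two_left.mpr (mod_cast hN : Odd (N : ℤ)),
    dvd_rfl, fun h => absurd h hN0⟩
  intro h
  refine h.cliqueFree le_rfl {infty N, v₁, v₂} (SimpleGraph.is3Clique_triple_iff.mpr ⟨?_, ?_, ?_⟩)
  · exact ⟨fun h => hN0 (congrArg (fun w : X N => w.1.2) h).symm, .inr (by simp [infty, v₁])⟩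
  · exact ⟨fun h => hN0 (congrArg (fun w : X N => w.1.2) h).symm, .inr (by simp [infty, v₂])⟩
  · exact ⟨fun h => by simpa [v₁, v₂] using congrArg (fun w : X N => w.1.1) h,
      .inl (by simp [v₁, v₂]; ring)⟩

end FareyGraph

/-- For every `l ∈ ℕ` (`l ≥ 1`), the graph `F_{2^l}` is a tree,
whereas for every odd prime `p` and every `l ≥ 1`, the graph `F_{p^l}` is not a
tree: it contains a cycle. -/
theorem stmt4 :
    (∀ l : ℕ, 1 ≤ l → (FareyGraph (2 ^ l)).IsTree) ∧
    (∀ p l : ℕ, p.Prime → p ≠ 2 → 1 ≤ l →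
      ¬ (FareyGraph (p ^ l)).IsTree ∧ ¬ (FareyGraph (p ^ l)).IsAcyclic) := by
  refine ⟨fun l hl => ⟨FareyGraph.connected_two_pow l, FareyGraph.isAcyclic_of_even ?_⟩,
    fun p l hp hp2 _ => ?_⟩
  · exact Nat.even_pow.mpr ⟨even_two, by omega⟩
  · have hcycle := FareyGraph.not_isAcyclic_of_odd ((hp.odd_of_ne_two hp2).pow (n := l))
    exact ⟨fun htree => hcycle htree.isAcyclic, hcycle⟩
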